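/- For every idempotent e ∈ E, the coset δ_e + J is a two-sided multiplicative identity of the quotient algebra A/J; that is, for every f ∈ A one has δ_e * f − f ∈ J and f * δ_e − f ∈ J. -/

import Mathlib

open MonoidAlgebra

/-- An inverse semigroup: a semigroup in which every element `s` has a unique
generalized inverse `s*` with `s * s* * s = s` and `s* * s * s* = s*`. -/
class InverseSemigroup (S : Type*) extends Semigroup S where
  star : S → S
  star_left : ∀ s : S, s * star s * s = s
  star_right : ∀ s : S, star s * s * star s = star s
  star_unique : ∀ s t : S, s * t * s = s → t * s * t = t → t = star s

variable (S : Type*) [InverseSemigroup S]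

/-- The ℂ-linear span in the semigroup algebra `A = MonoidAlgebra ℂ S` of the set
`{δ_{s e t} - δ_{s t} : s, t ∈ S, e ∈ E}`, where `E = {e : e * e = e}` is the set of
idempotents of `S`. -/
noncomputable def J : Submodule ℂ (MonoidAlgebra ℂ S) :=
  Submodule.span ℂ { x | ∃ s t e : S, e * e = e ∧
    x = single (s * e * t) (1 : ℂ) - single (s * t) (1 : ℂ) }

variable {S}

/-!
In an inverse semigroup idempotents commute, and `a = (a a*) a = a (a* a)` with `a a*` and `a* a`
idempotent. Hence `e a = (a a*) e a` and `a e = a e (a* a)`, so `δ_e δ_a - δ_a` and `δ_a δ_e - δ_a`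
are generators of `J`. Both sides of the claim are linear in `f`, so the case of point masses
gives the general one.
-/

namespace InverseSemigroup

theorem star_eq_self_of_isIdempotentElem {e : S} (he : IsIdempotentElem e) : star e = e :=
  (star_unique e e (by rw [he.eq, he.eq]) (by rw [he.eq, he.eq])).symm

theorem isIdempotentElem_mul_star (s : S) : IsIdempotentElem (s * star s) := by
  rw [IsIdempotentElem, ← mul_assoc, star_left]

theorem isIdempotentElem_star_mul (s : S) : IsIdempotentElem (star s * s) := by
  rw [IsIdempotentElem, mul_assoc, ← mul_assoc s, star_left]

theorem isIdempotentElem_mul {e f : S} (he : IsIdempotentElem e) (hf : IsIdempotentElem f) :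
    IsIdempotentElem (e * f) := by
  set a := star (e * f)
  have h₁ : e * f * a * (e * f) = e * f := star_left _
  have h₂ : a * (e * f) * a = a := star_right _
  -- `f a e` is also an inverse of `e f`, so it equals `a`; this forces `a` to be idempotent.
  have hfae : f * a * e = a := by
    apply star_unique
    · calc e * f * (f * a * e) * (e * f) = e * f * a * (e * f) := by
            simp only [mul_assoc, he.mul_self_mul, hf.mul_self_mul]
        _ = e * f := h₁
    · calc f * a * e * (e * f) * (f * a * e) = f * (a * (e * f) * a) * e := by
            simp only [mul_assoc, he.mul_self_mul, hf.mul_self_mul]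
        _ = f * a * e := by rw [h₂, mul_assoc]
  have ha : IsIdempotentElem a := by
    calc a * a = f * a * e * (f * a * e) := by rw [hfae]
      _ = f * (a * (e * f) * a) * e := by simp only [mul_assoc]
      _ = a := by rw [h₂, hfae]
  have hef : e * f = a := by
    rw [← star_eq_self_of_isIdempotentElem ha]
    exact star_unique a (e * f) h₂ h₁
  rwa [hef]

theorem commute_of_isIdempotentElem {e f : S} (he : IsIdempotentElem e)
    (hf : IsIdempotentElem f) : Commute e f := by
  have hef := isIdempotentElem_mul he hf
  have hfe := isIdempotentElem_mul hf he
  have : f * e = star (e * f) := by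
    apply star_unique
    · calc e * f * (f * e) * (e * f) = e * f * (e * f) := by
            simp only [mul_assoc, he.mul_self_mul, hf.mul_self_mul]
        _ = e * f := hef.eq
    · calc f * e * (e * f) * (f * e) = f * e * (f * e) := by
            simp only [mul_assoc, he.mul_self_mul, hf.mul_self_mul]
        _ = f * e := hfe.eq
  rw [Commute, SemiconjBy, this, star_eq_self_of_isIdempotentElem hef]

end InverseSemigroup

theorem MonoidAlgebra.map_mem_of_map_single_one_mem {R M N : Type*} [Semiring R]
    [AddCommMonoid N] [Module R N] {p : Submodule R N} (L : MonoidAlgebra R M →ₗ[R] N)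
    (h : ∀ m, L (single m 1) ∈ p) (f : MonoidAlgebra R M) : L f ∈ p := by
  induction f using MonoidAlgebra.induction_linear with
  | zero => simp
  | add x y hx hy => simpa using p.add_mem hx hy
  | single m r =>
    rw [← mul_one r, ← smul_single', map_smul]
    exact p.smul_mem r (h m)

open InverseSemigroup

theorem single_mul_sub_single_mem_J {e : S} (he : IsIdempotentElem e) (s t : S) :
    single (s * e * t) (1 : ℂ) - single (s * t) 1 ∈ J S :=
  Submodule.subset_span ⟨s, t, e, he, rfl⟩

theorem single_idem_mul_single_sub_mem_J {e : S} (he : IsIdempotentElem e) (a : S) :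
    single e (1 : ℂ) * single a 1 - single a 1 ∈ J S := by
  have hea : a * star a * e * a = e * a := by
    rw [(commute_of_isIdempotentElem (isIdempotentElem_mul_star a) he).eq, mul_assoc e,
      star_left]
  simpa [single_mul_single, hea, star_left] using single_mul_sub_single_mem_J he (a * star a) a

theorem single_mul_single_idem_sub_mem_J {e : S} (he : IsIdempotentElem e) (a : S) :
    single a (1 : ℂ) * single e 1 - single a 1 ∈ J S := by
  have hae : a * e * (star a * a) = a * e := by
    rw [mul_assoc, (commute_of_isIdempotentElem he (isIdempotentElem_star_mul a)).eq,
      ← mul_assoc, ← mul_assoc, star_left]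
  have ha : a * (star a * a) = a := by rw [← mul_assoc, star_left]
  simpa [single_mul_single, hae, ha] using single_mul_sub_single_mem_J he a (star a * a)

/-- for every idempotent `e ∈ E`, the coset `δ_e + J` is a two-sided
multiplicative identity of `A ⧸ J`: for every `f ∈ A` one has `δ_e * f - f ∈ J`
and `f * δ_e - f ∈ J`. -/
theorem single_idem_coset_is_identity (e : S) (he : e * e = e) (f : MonoidAlgebra ℂ S) :
    single e (1 : ℂ) * f - f ∈ J S ∧ f * single e (1 : ℂ) - f ∈ J S :=
  ⟨map_mem_of_map_single_one_mem (LinearMap.mulLeft ℂ (single e 1) - LinearMap.id)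
      (single_idem_mul_single_sub_mem_J he) f,
    map_mem_of_map_single_one_mem (LinearMap.mulRight ℂ (single e 1) - LinearMap.id)
      (single_mul_single_idem_sub_mem_J he) f⟩
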